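/- For every n ≥ 4, in the target group G_D(n), with e_{ij} := (i j)·t_{ij} as above, one has e_{ij}·e_{ik} = e_{jk} for all pairwise distinct indices i, j, k in {1,…,n}. Consequently the subgroup of G_D(n) generated by all the e_{ij} is generated by the n−1 elements e_{12}, e_{13}, …, e_{1n}. -/

import Mathlib

open Monoid Pointwise

/-- The type of `k`-element subsets of `Fin n`. -/
abbrev KSub (n k : ℕ) := {s : Finset (Fin n) // s.card = k}

/-- The free product of copies of `ℤ/2ℤ` indexed by the `k`-element subsets of `Fin n`. -/
abbrev FP (n k : ℕ) := Monoid.CoprodI (fun _ : KSub n k => Multiplicative (ZMod 2))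

/-- The symmetric generator `t_S`. -/
def tFP {n k : ℕ} (S : KSub n k) : FP n k :=
  Monoid.CoprodI.of (i := S) (Multiplicative.ofAdd (1 : ZMod 2))

/-- The action of a permutation of `Fin n` on the `k`-element subsets. -/
instance KSub.instMulAction (n k : ℕ) : MulAction (Equiv.Perm (Fin n)) (KSub n k) where
  smul σ S := ⟨σ • S.1, by rw [Finset.card_smul_finset]; exact S.2⟩
  one_smul S := Subtype.ext (one_smul _ S.1)
  mul_smul σ τ S := Subtype.ext (mul_smul σ τ S.1)

/-- The endomorphism of the free product induced by a permutation of `Fin n`. -/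
def fpHom {n k : ℕ} (σ : Equiv.Perm (Fin n)) : FP n k →* FP n k :=
  Monoid.CoprodI.lift (fun S => Monoid.CoprodI.of (M := fun _ : KSub n k => Multiplicative (ZMod 2)) (i := σ • S))

lemma fpHom_comp {n k : ℕ} (σ τ : Equiv.Perm (Fin n)) :
    (fpHom (n := n) (k := k) σ).comp (fpHom τ) = fpHom (σ * τ) := by
  apply Monoid.CoprodI.ext_hom
  intro S
  ext x
  simp [fpHom, Monoid.CoprodI.lift_of, mul_smul]

lemma fpHom_one {n k : ℕ} : fpHom (n := n) (k := k) 1 = MonoidHom.id _ := by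
  apply Monoid.CoprodI.ext_hom
  intro S
  ext x
  simp [fpHom, Monoid.CoprodI.lift_of]

/-- The action of `Sym(Fin n)` on the free product, permuting the free factors. -/
def fpAut (n k : ℕ) : Equiv.Perm (Fin n) →* MulAut (FP n k) :=
  MonoidHom.mk' (fun σ =>
    { toFun := fpHom σ
      invFun := fpHom σ⁻¹
      left_inv := fun x => by
        have h := fpHom_comp (n := n) (k := k) σ⁻¹ σ
        rw [inv_mul_cancel, fpHom_one] at h
        exact DFunLike.congr_fun h x
      right_inv := fun x => by
        have h := fpHom_comp (n := n) (k := k) σ σ⁻¹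
        rw [mul_inv_cancel, fpHom_one] at h
        exact DFunLike.congr_fun h x
      map_mul' := map_mul _ })
    (fun σ τ => by
      ext x
      exact (DFunLike.congr_fun (fpHom_comp (n := n) (k := k) σ τ) x).symm)

/-- The progenitor `2^{⋆C(n,k)} : Sₙ`. -/
abbrev Progenitor (n k : ℕ) := FP n k ⋊[fpAut n k] Equiv.Perm (Fin n)

/-- The target group: the quotient of the progenitor by the normal closure of the
single relator `(t_{S₀}·σ₀)³`. -/
abbrev TargetGroup (n k : ℕ) (S₀ : KSub n k) (σ₀ : Equiv.Perm (Fin n)) :=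
  Progenitor n k ⧸ Subgroup.normalClosure
    {(SemidirectProduct.inl (tFP S₀) * SemidirectProduct.inr σ₀) ^ 3}

/-- The image in the target group of the symmetric generator `t_S`. -/
def tbar {n k : ℕ} (S₀ : KSub n k) (σ₀ : Equiv.Perm (Fin n)) (S : KSub n k) :
    TargetGroup n k S₀ σ₀ :=
  QuotientGroup.mk (SemidirectProduct.inl (tFP S))

/-- The canonical map from the control group `Sₙ` to the target group. -/
def pbar {n k : ℕ} (S₀ : KSub n k) (σ₀ : Equiv.Perm (Fin n)) :
    Equiv.Perm (Fin n) →* TargetGroup n k S₀ σ₀ :=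
  (QuotientGroup.mk' _).comp (SemidirectProduct.inr)

/-- The subset `{1, 2}` (0-based: `{0, 1}`) of `Fin n`. -/
def S12 (n : ℕ) (hn : 4 ≤ n) : KSub n 2 :=
  ⟨{⟨0, by omega⟩, ⟨1, by omega⟩}, Finset.card_pair (by simp [Fin.ext_iff])⟩

/-- The transposition `(2 3)` (0-based: `(1 2)`) of `Fin n`. -/
def σD (n : ℕ) (hn : 4 ≤ n) : Equiv.Perm (Fin n) :=
  Equiv.swap ⟨1, by omega⟩ ⟨2, by omega⟩

/-- The target group `G_D(n)`, obtained by factoring the progenitor `2^{⋆C(n,2)} : Sₙ`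
by the single relator `(t_{12}·(2 3))³`. -/
abbrev GD (n : ℕ) (hn : 4 ≤ n) := TargetGroup n 2 (S12 n hn) (σD n hn)

/-- The symmetric generator `t_{ij}` of `G_D(n)`. -/
def tD {n : ℕ} (hn : 4 ≤ n) (i j : Fin n) (h : i ≠ j) : GD n hn :=
  tbar (S12 n hn) (σD n hn) ⟨{i, j}, Finset.card_pair h⟩

/-- The canonical map from the control group `Sₙ` to `G_D(n)`. -/
def pD {n : ℕ} (hn : 4 ≤ n) : Equiv.Perm (Fin n) →* GD n hn :=
  pbar (S12 n hn) (σD n hn)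

/-- The element `e_{ij} := (i j)·t_{ij}` of `G_D(n)`. -/
def eD {n : ℕ} (hn : 4 ≤ n) (i j : Fin n) (h : i ≠ j) : GD n hn :=
  pD hn (Equiv.swap i j) * tD hn i j h

/-! Conjugating the relator `(t_{12}·(2 3))³` by a permutation sending `1, 2, 3` to `a, b, c` gives
`(t_{ab}·(b c))³ = 1`; since `(b c)` conjugates `t_{ab}` to `t_{ac}`, this says
`t_{ab} t_{ac} t_{ab} = (b c)`. Moving `(i k)` to the left,
`e_{ij} e_{ik} = (i j)(i k) t_{kj} t_{ki} = (j k)(i j) t_{kj} t_{ki}`, and substituting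
`(i j) = t_{kj} t_{ki} t_{kj}` and cancelling the involutions leaves `(j k) t_{jk} = e_{jk}`.
Together with `e_{ij} = e_{ji}` this writes every `e_{jk}` as `e_{1j} e_{1k}`. -/

open Equiv

theorem Equiv.Perm.exists_extending_triple {α : Type*} {x y z a b c : α}
    (hxy : x ≠ y) (hxz : x ≠ z) (hyz : y ≠ z) (hab : a ≠ b) (hac : a ≠ c) (hbc : b ≠ c) :
    ∃ π : Perm α, π x = a ∧ π y = b ∧ π z = c := by
  have injective_triple {p q r : α} (hpq : p ≠ q) (hpr : p ≠ r) (hqr : q ≠ r) :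
      Function.Injective ![p, q, r] := by
    intro u v
    fin_cases u <;> fin_cases v <;> simp [hpq, hpr, hqr, hpq.symm, hpr.symm, hqr.symm]
  obtain ⟨π, hπ⟩ := Perm.exists_extending_pair _ _
    (injective_triple hxy hxz hyz) (injective_triple hab hac hbc)
  exact ⟨π, hπ 0, hπ 1, hπ 2⟩

theorem mul_conj_mul_eq_of_pow_three {G : Type*} [Group G] {t p : G} (hp : p * p = 1)
    (h : (t * p) ^ 3 = 1) : t * (p * t * p⁻¹) * t = p := by
  have hinv : p⁻¹ = p := inv_eq_of_mul_eq_one_right hp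
  rw [hinv]
  calc t * (p * t * p) * t = (t * p) ^ 3 * p⁻¹ := by
        simp only [pow_succ, pow_zero, one_mul]; group
    _ = p := by rw [h, one_mul, hinv]

theorem KSub.smul_pair {n : ℕ} (π : Perm (Fin n)) {i j : Fin n} (h : i ≠ j) :
    π • (⟨{i, j}, Finset.card_pair h⟩ : KSub n 2) =
      ⟨{π i, π j}, Finset.card_pair (π.injective.ne h)⟩ :=
  Subtype.ext (show π • ({i, j} : Finset (Fin n)) = {π i, π j} by
    simp [Finset.smul_finset_insert, Perm.smul_def])

section TargetGroup

variable {n k : ℕ} {S₀ : KSub n k} {σ₀ : Perm (Fin n)}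

theorem tbar_mul_self (S : KSub n k) : tbar S₀ σ₀ S * tbar S₀ σ₀ S = 1 := by
  have h : tFP S * tFP S = 1 := by
    rw [tFP, ← map_mul, ← ofAdd_add, show (1 + 1 : ZMod 2) = 0 from rfl, ofAdd_zero, map_one]
  rw [tbar, ← QuotientGroup.mk_mul, ← map_mul, h, map_one, QuotientGroup.mk_one]

theorem pbar_mul_tbar_mul_inv (π : Perm (Fin n)) (S : KSub n k) :
    pbar S₀ σ₀ π * tbar S₀ σ₀ S * (pbar S₀ σ₀ π)⁻¹ = tbar S₀ σ₀ (π • S) := by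
  simp only [pbar, tbar, MonoidHom.comp_apply, QuotientGroup.mk'_apply, ← QuotientGroup.mk_inv,
    ← QuotientGroup.mk_mul, ← map_inv, ← SemidirectProduct.inl_aut]
  congr 2

theorem tbar_mul_pbar_pow_three : (tbar S₀ σ₀ S₀ * pbar S₀ σ₀ σ₀) ^ 3 = 1 := by
  rw [tbar, pbar, MonoidHom.comp_apply, QuotientGroup.mk'_apply, ← QuotientGroup.mk_mul,
    ← QuotientGroup.mk_pow, QuotientGroup.eq_one_iff]
  exact Subgroup.subset_normalClosure rfl

theorem tbar_smul_mul_pbar_conj_pow_three (π : Perm (Fin n)) :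
    (tbar S₀ σ₀ (π • S₀) * pbar S₀ σ₀ (π * σ₀ * π⁻¹)) ^ 3 = 1 := by
  calc (tbar S₀ σ₀ (π • S₀) * pbar S₀ σ₀ (π * σ₀ * π⁻¹)) ^ 3
      = (pbar S₀ σ₀ π * (tbar S₀ σ₀ S₀ * pbar S₀ σ₀ σ₀) * (pbar S₀ σ₀ π)⁻¹) ^ 3 := by
        rw [← pbar_mul_tbar_mul_inv, map_mul, map_mul, map_inv]; group
    _ = 1 := by rw [conj_pow, tbar_mul_pbar_pow_three, mul_one, mul_inv_cancel]

end TargetGroup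

theorem Subgroup.closure_eq_closure_row_of_mul_eq {G ι : Type*} [Group G]
    (e : ∀ i j : ι, i ≠ j → G) (i₀ : ι) (he_comm : ∀ i j (h : i ≠ j), e i j h = e j i h.symm)
    (he_mul : ∀ j k (hj : i₀ ≠ j) (hk : i₀ ≠ k) (hjk : j ≠ k), e i₀ j hj * e i₀ k hk = e j k hjk) :
    closure {x | ∃ (i j : ι) (h : i ≠ j), x = e i j h} =
      closure {x | ∃ (j : ι) (h : i₀ ≠ j), x = e i₀ j h} := by
  refine le_antisymm (closure_le _ |>.2 ?_) (closure_mono fun x ⟨j, h, hx⟩ => ⟨i₀, j, h, hx⟩)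
  rintro x ⟨i, j, h, rfl⟩
  by_cases hi : i₀ = i
  · subst hi
    exact subset_closure ⟨j, h, rfl⟩
  by_cases hj : i₀ = j
  · subst hj
    rw [he_comm]
    exact subset_closure ⟨i, h.symm, rfl⟩
  rw [← he_mul i j hi hj h]
  exact mul_mem (subset_closure ⟨i, hi, rfl⟩) (subset_closure ⟨j, hj, rfl⟩)

section GD

variable {n : ℕ} (hn : 4 ≤ n)

theorem tD_comm {i j : Fin n} (h : i ≠ j) : tD hn i j h = tD hn j i h.symm :=
  congrArg _ (Subtype.ext (Finset.pair_comm i j))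

theorem tD_mul_self {i j : Fin n} (h : i ≠ j) : tD hn i j h * tD hn i j h = 1 :=
  tbar_mul_self _

theorem pD_mul_tD_mul_inv (π : Perm (Fin n)) {i j i' j' : Fin n} (h : i ≠ j) (h' : i' ≠ j')
    (hi : π i = i') (hj : π j = j') : pD hn π * tD hn i j h * (pD hn π)⁻¹ = tD hn i' j' h' := by
  subst hi hj
  exact (pbar_mul_tbar_mul_inv π _).trans (congrArg _ (KSub.smul_pair π h))

theorem tD_mul_pD_swap_pow_three {a b c : Fin n} (hab : a ≠ b) (hac : a ≠ c) (hbc : b ≠ c) :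
    (tD hn a b hab * pD hn (swap b c)) ^ 3 = 1 := by
  have h01 : (⟨0, by omega⟩ : Fin n) ≠ ⟨1, by omega⟩ := by simp [Fin.ext_iff]
  have h02 : (⟨0, by omega⟩ : Fin n) ≠ ⟨2, by omega⟩ := by simp [Fin.ext_iff]
  have h12 : (⟨1, by omega⟩ : Fin n) ≠ ⟨2, by omega⟩ := by simp [Fin.ext_iff]
  obtain ⟨π, h0, h1, h2⟩ := Perm.exists_extending_triple h01 h02 h12 hab hac hbc
  have hS : π • S12 n hn = ⟨{a, b}, Finset.card_pair hab⟩ :=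
    (KSub.smul_pair π h01).trans (Subtype.ext (by simp only [h0, h1]))
  have hσ : π * σD n hn * π⁻¹ = swap b c := by rw [σD, ← swap_apply_apply, h1, h2]
  have h := tbar_smul_mul_pbar_conj_pow_three (S₀ := S12 n hn) (σ₀ := σD n hn) π
  rwa [hS, hσ] at h

theorem tD_mul_tD_mul_tD {a b c : Fin n} (hab : a ≠ b) (hac : a ≠ c) (hbc : b ≠ c) :
    tD hn a b hab * tD hn a c hac * tD hn a b hab = pD hn (swap b c) := by
  rw [← pD_mul_tD_mul_inv hn (swap b c) hab hac (swap_apply_of_ne_of_ne hab hac)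
    (swap_apply_left b c)]
  exact mul_conj_mul_eq_of_pow_three (by rw [← map_mul, swap_mul_self, map_one])
    (tD_mul_pD_swap_pow_three hn hab hac hbc)

theorem eD_comm {i j : Fin n} (h : i ≠ j) : eD hn i j h = eD hn j i h.symm := by
  rw [eD, eD, swap_comm, tD_comm]

theorem eD_mul_eD {i j k : Fin n} (hij : i ≠ j) (hik : i ≠ k) (hjk : j ≠ k) :
    eD hn i j hij * eD hn i k hik = eD hn j k hjk := by
  have hconj : pD hn (swap i k) * tD hn k j hjk.symm * (pD hn (swap i k))⁻¹ = tD hn i j hij :=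
    pD_mul_tD_mul_inv hn _ _ _ (swap_apply_right i k) (swap_apply_of_ne_of_ne hij.symm hjk)
  have hswap : swap j k * swap i j = swap i j * swap i k :=
    calc swap j k * swap i j = swap i j * swap i k * (swap i j)⁻¹ * swap i j := by
          rw [← swap_apply_apply, swap_apply_left, swap_apply_of_ne_of_ne hik.symm hjk.symm]
      _ = swap i j * swap i k := by group
  have hinvolutions : tD hn k j hjk.symm * tD hn k i hik.symm * tD hn k j hjk.symm *
      (tD hn k j hjk.symm * tD hn k i hik.symm) = tD hn k j hjk.symm :=
    calc _ = tD hn k j hjk.symm * (tD hn k i hik.symm *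
            (tD hn k j hjk.symm * tD hn k j hjk.symm) * tD hn k i hik.symm) := by group
      _ = tD hn k j hjk.symm := by rw [tD_mul_self, mul_one, tD_mul_self, mul_one]
  calc eD hn i j hij * eD hn i k hik
      = pD hn (swap i j) * (pD hn (swap i k) * tD hn k j hjk.symm * (pD hn (swap i k))⁻¹) *
          (pD hn (swap i k) * tD hn i k hik) := by rw [hconj]; rfl
    _ = pD hn (swap i j * swap i k) * (tD hn k j hjk.symm * tD hn k i hik.symm) := by
        rw [map_mul, tD_comm hn hik]; group
    _ = pD hn (swap j k) * (pD hn (swap i j) * (tD hn k j hjk.symm * tD hn k i hik.symm)) := by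
        rw [← hswap, map_mul, mul_assoc]
    _ = pD hn (swap j k) * tD hn k j hjk.symm := by
        rw [swap_comm i j, ← tD_mul_tD_mul_tD hn hjk.symm hik.symm hij.symm, hinvolutions]
    _ = eD hn j k hjk := by rw [tD_comm hn hjk.symm]; rfl

end GD

/-- For every `n ≥ 4`, in `G_D(n)` one has `e_{ij}·e_{ik} = e_{jk}` for
pairwise distinct `i, j, k`; consequently the subgroup generated by all the `e_{ij}` is
generated by the `n − 1` elements `e_{12}, e_{13}, …, e_{1n}` (0-based: `e_{0j}`, `j ≠ 0`). -/
theorem targetGroup_D_e_mul (n : ℕ) (hn : 4 ≤ n) :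
    (∀ (i j k : Fin n) (hij : i ≠ j) (hik : i ≠ k) (hjk : j ≠ k),
        eD hn i j hij * eD hn i k hik = eD hn j k hjk) ∧
      Subgroup.closure {x : GD n hn | ∃ (i j : Fin n) (h : i ≠ j), x = eD hn i j h} =
        Subgroup.closure
          {x : GD n hn | ∃ (j : Fin n) (h : (⟨0, by omega⟩ : Fin n) ≠ j),
            x = eD hn ⟨0, by omega⟩ j h} :=
  ⟨fun _ _ _ => eD_mul_eD hn, Subgroup.closure_eq_closure_row_of_mul_eq (eD hn) _
    (fun _ _ => eD_comm hn) (fun _ _ => eD_mul_eD hn)⟩
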